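/- arXiv:2308.10427 — 2 statements merged into one kernel-verified Lean document; each statement's English description precedes it below -/
import Mathlib

section
/- Let z₁, …, z_n be points in a Hilbert space and let G be their geometric median, i.e., a minimizer of z ↦ Σᵢ ‖z − zᵢ‖. Let Z' ⊆ {1,…,n} with |Z'| < n/2, set α = |Z'|/n and C_α = (2 − 2α)/(1 − 2α). Then ‖G‖² ≤ (C_α)²/(n − |Z'|) · Σ_{i ∉ Z'} ‖zᵢ‖². -/
/-! Comparing `G` with the competitor `0` gives `∑ ‖G - zᵢ‖ ≤ ∑ ‖zᵢ‖`. By the triangle inequality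
each point of `Z'` contributes at least `‖zᵢ‖ - ‖G‖` to the left side and every other point at
least `‖G‖ - ‖zᵢ‖`, whence `(n - 2|Z'|) ‖G‖ ≤ 2 ∑_{i ∉ Z'} ‖zᵢ‖`; Cauchy–Schwarz on the right side
finishes. -/

open Finset

def IsGeometricMedian {ι E : Type*} [Fintype ι] [SeminormedAddCommGroup E] (z : ι → E) (G : E) :
    Prop :=
  ∀ y, ∑ i, ‖G - z i‖ ≤ ∑ i, ‖y - z i‖

namespace IsGeometricMedian

variable {ι E : Type*} [Fintype ι] [SeminormedAddCommGroup E] {z : ι → E} {G : E}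

lemma sum_norm_sub_le (hG : IsGeometricMedian z G) : ∑ i, ‖G - z i‖ ≤ ∑ i, ‖z i‖ := by
  simpa using hG 0

lemma card_sub_two_mul_card_mul_norm_le [DecidableEq ι] (hG : IsGeometricMedian z G)
    (s : Finset ι) :
    ((Fintype.card ι : ℝ) - 2 * #s) * ‖G‖ ≤ 2 * ∑ i ∈ sᶜ, ‖z i‖ := by
  have hin : ∑ i ∈ s, (‖z i‖ - ‖G‖) ≤ ∑ i ∈ s, ‖G - z i‖ :=
    sum_le_sum fun i _ => by linarith [norm_sub_norm_le (z i) G, norm_sub_rev (z i) G]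
  have hout : ∑ i ∈ sᶜ, (‖G‖ - ‖z i‖) ≤ ∑ i ∈ sᶜ, ‖G - z i‖ :=
    sum_le_sum fun i _ => norm_sub_norm_le G (z i)
  have hcard : (#sᶜ : ℝ) = Fintype.card ι - #s := by
    rw [card_compl, Nat.cast_sub (card_le_univ s)]
  rw [sum_sub_distrib, sum_const, nsmul_eq_mul] at hin
  rw [sum_sub_distrib, sum_const, nsmul_eq_mul, hcard] at hout
  have := hG.sum_norm_sub_le
  rw [← sum_add_sum_compl s, ← sum_add_sum_compl s (fun i => ‖z i‖)] at this
  linarith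

lemma sq_norm_le [DecidableEq ι] (hG : IsGeometricMedian z G) (s : Finset ι)
    (hs : 2 * #s < Fintype.card ι) :
    ‖G‖ ^ 2 ≤ 4 * #sᶜ / ((Fintype.card ι : ℝ) - 2 * #s) ^ 2 * ∑ i ∈ sᶜ, ‖z i‖ ^ 2 := by
  have hpos : (0 : ℝ) < Fintype.card ι - 2 * #s := by
    rw [sub_pos]; exact_mod_cast hs
  have hnorm : ‖G‖ ≤ (2 * ∑ i ∈ sᶜ, ‖z i‖) / ((Fintype.card ι : ℝ) - 2 * #s) := by
    rw [le_div_iff₀ hpos, mul_comm]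
    exact hG.card_sub_two_mul_card_mul_norm_le s
  calc ‖G‖ ^ 2 ≤ ((2 * ∑ i ∈ sᶜ, ‖z i‖) / ((Fintype.card ι : ℝ) - 2 * #s)) ^ 2 := by
        gcongr
    _ = 4 * (∑ i ∈ sᶜ, ‖z i‖) ^ 2 / ((Fintype.card ι : ℝ) - 2 * #s) ^ 2 := by
        rw [div_pow, mul_pow]; norm_num
    _ ≤ 4 * (#sᶜ * ∑ i ∈ sᶜ, ‖z i‖ ^ 2) / ((Fintype.card ι : ℝ) - 2 * #s) ^ 2 := by
        gcongr; exact sq_sum_le_card_mul_sum_sq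
    _ = _ := by ring

end IsGeometricMedian

/-- `C_α² / (n - k)` for `α = k / n`, with the fraction `α` cleared. -/
lemma geometric_median_constant_sq_div_eq {n k : ℝ} (hn : n ≠ 0) (hk : n - 2 * k ≠ 0)
    (hnk : n - k ≠ 0) :
    ((2 - 2 * (k / n)) / (1 - 2 * (k / n))) ^ 2 / (n - k) = 4 * (n - k) / (n - 2 * k) ^ 2 := by
  have h : 1 - 2 * (k / n) = (n - 2 * k) / n := by field_simp
  rw [h]
  field_simp
  ring

theorem stmt12_general {E : Type*} [NormedAddCommGroup E]
    (n : ℕ) (z : Fin n → E) (G : E)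
    (hG : ∀ y, ∑ i, ‖G - z i‖ ≤ ∑ i, ‖y - z i‖)
    (Z' : Finset (Fin n)) (hZ' : 2 * Z'.card < n) :
    ‖G‖ ^ 2 ≤
      ((2 - 2 * ((Z'.card : ℝ) / n)) / (1 - 2 * ((Z'.card : ℝ) / n))) ^ 2
        / ((n : ℝ) - Z'.card) * ∑ i ∈ Z'ᶜ, ‖z i‖ ^ 2 := by
  have hbound := IsGeometricMedian.sq_norm_le hG Z' (by simpa using hZ')
  rw [Fintype.card_fin] at hbound
  have hcard : (#Z'ᶜ : ℝ) = n - #Z' := by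
    rw [card_compl, Fintype.card_fin, Nat.cast_sub (by omega)]
  have h2k : (2 * #Z' : ℝ) < n := by exact_mod_cast hZ'
  have hn : (0 : ℝ) < n := by linarith
  rwa [geometric_median_constant_sq_div_eq hn.ne' (by linarith) (by linarith), ← hcard]

/-- Lemma 1 (geometric median robustness): if `G` is a geometric median of
`z₁, …, z_n` in a Hilbert space and `Z'` is a subset with `|Z'| < n/2`, then
`‖G‖² ≤ C_α²/(n - |Z'|) · Σ_{i ∉ Z'} ‖z i‖²` with `α = |Z'|/n`,
`C_α = (2 - 2α)/(1 - 2α)`. -/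
theorem stmt12 {E : Type*} [NormedAddCommGroup E] [InnerProductSpace ℝ E]
    [CompleteSpace E]
    (n : ℕ) (z : Fin n → E) (G : E)
    (hG : ∀ y, ∑ i, ‖G - z i‖ ≤ ∑ i, ‖y - z i‖)
    (Z' : Finset (Fin n)) (hZ' : 2 * Z'.card < n) :
    ‖G‖ ^ 2 ≤
      ((2 - 2 * ((Z'.card : ℝ) / n)) / (1 - 2 * ((Z'.card : ℝ) / n))) ^ 2
        / ((n : ℝ) - Z'.card) * ∑ i ∈ Z'ᶜ, ‖z i‖ ^ 2 :=
  stmt12_general n z G hG Z' hZ'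
end

section
/- Let z₁, …, z_n be points in a Hilbert space, w* a fixed point, and G = geomed{z₁,…,z_n}. Let B ⊆ {1,…,n} with |B| < n/2, β = |B|/n, C_β = (2−2β)/(1−2β). Then ‖G − w*‖² ≤ (C_β)²/(n − |B|) · Σ_{i ∉ B} ‖zᵢ − w*‖². -/
/-- Translation-invariant geometric median robustness: if `G` is a geometric median of
`z₁, …, z_n` in a Hilbert space, `B` a subset with `|B| < n/2`, `β = |B|/n`,
`C_β = (2-2β)/(1-2β)`, then `‖G - w*‖² ≤ C_β²/(n-|B|) · Σ_{i ∉ B} ‖z i - w*‖²`. -/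
theorem stmt13 {E : Type*} [NormedAddCommGroup E] [InnerProductSpace ℝ E]
    [CompleteSpace E]
    (n : ℕ) (z : Fin n → E) (wstar : E) (G : E)
    (hG : ∀ y, ∑ i, ‖G - z i‖ ≤ ∑ i, ‖y - z i‖)
    (B : Finset (Fin n)) (hB : 2 * B.card < n) :
    ‖G - wstar‖ ^ 2 ≤
      ((2 - 2 * ((B.card : ℝ) / n)) / (1 - 2 * ((B.card : ℝ) / n))) ^ 2
        / ((n : ℝ) - B.card) * ∑ i ∈ Bᶜ, ‖z i - wstar‖ ^ 2 := by
  set m := B.card with hm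
  have hmn : m ≤ n := by
    simpa using (Finset.card_le_card (Finset.subset_univ B)).trans_eq (by simp)
  have hn2m : (0:ℝ) < (n:ℝ) - 2*m := by
    have : (2*m : ℝ) < n := by exact_mod_cast hB
    linarith
  have hnm : (0:ℝ) < (n:ℝ) - m := by
    have : (m:ℝ) ≤ n := by exact_mod_cast hmn
    linarith
  have hn : (0:ℝ) < (n:ℝ) := by linarith
  set r := ‖G - wstar‖ with hr
  set S := ∑ i ∈ Bᶜ, ‖z i - wstar‖ with hS
  have hcardc : (Bᶜ : Finset (Fin n)).card = n - m := by
    simp [Finset.card_compl, hm]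
  have hcardcR : ((Bᶜ : Finset (Fin n)).card : ℝ) = (n:ℝ) - m := by
    rw [hcardc]; push_cast [hmn]; ring
  -- key inequality
  have key : ((n:ℝ) - 2*m) * r ≤ 2 * S := by
    have h1 := hG wstar
    have hsplitG : ∑ i, ‖G - z i‖ = ∑ i ∈ B, ‖G - z i‖ + ∑ i ∈ Bᶜ, ‖G - z i‖ :=
      (Finset.sum_add_sum_compl B _).symm
    have hsplitW : ∑ i, ‖wstar - z i‖ = ∑ i ∈ B, ‖wstar - z i‖ + ∑ i ∈ Bᶜ, ‖wstar - z i‖ :=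
      (Finset.sum_add_sum_compl B _).symm
    have h2 : ∑ i ∈ B, (‖z i - wstar‖ - r) ≤ ∑ i ∈ B, ‖G - z i‖ := by
      apply Finset.sum_le_sum
      intro i _
      have := norm_sub_le (z i - G) (wstar - G)
      have h3 : ‖z i - G‖ = ‖G - z i‖ := norm_sub_rev _ _
      have h4 : ‖wstar - G‖ = r := norm_sub_rev _ _
      have h5 : z i - G - (wstar - G) = z i - wstar := by abel
      rw [h5, h3, h4] at this
      linarith
    have h6 : ∑ i ∈ Bᶜ, (r - ‖z i - wstar‖) ≤ ∑ i ∈ Bᶜ, ‖G - z i‖ := by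
      apply Finset.sum_le_sum
      intro i _
      have := norm_sub_le (G - z i) (wstar - z i)
      have h5 : G - z i - (wstar - z i) = G - wstar := by abel
      have h4 : ‖wstar - z i‖ = ‖z i - wstar‖ := norm_sub_rev _ _
      rw [h5, h4, ← hr] at this
      linarith
    have h7 : ∀ i, ‖wstar - z i‖ = ‖z i - wstar‖ := fun i => norm_sub_rev _ _
    have hBsum : ∑ i ∈ B, (‖z i - wstar‖ - r) = (∑ i ∈ B, ‖z i - wstar‖) - m * r := by
      rw [Finset.sum_sub_distrib, Finset.sum_const, nsmul_eq_mul, hm]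
    have hBcsum : ∑ i ∈ Bᶜ, (r - ‖z i - wstar‖) = ((n:ℝ) - m) * r - S := by
      rw [Finset.sum_sub_distrib, Finset.sum_const, nsmul_eq_mul, hcardcR, hS]
    have hWB : ∑ i ∈ B, ‖wstar - z i‖ = ∑ i ∈ B, ‖z i - wstar‖ := by
      simp [h7]
    have hWBc : ∑ i ∈ Bᶜ, ‖wstar - z i‖ = S := by
      simp [h7, hS]
    rw [hsplitG, hsplitW, hWB, hWBc] at h1
    rw [hBsum] at h2
    rw [hBcsum] at h6
    linarith
  have hr0 : 0 ≤ r := norm_nonneg _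
  have hS0 : 0 ≤ S := Finset.sum_nonneg fun i _ => norm_nonneg _
  -- Cauchy–Schwarz
  have hCS : S ^ 2 ≤ ((n:ℝ) - m) * ∑ i ∈ Bᶜ, ‖z i - wstar‖ ^ 2 := by
    have := sq_sum_le_card_mul_sum_sq (s := Bᶜ) (f := fun i => ‖z i - wstar‖)
    rw [hcardcR] at this
    exact this
  have hT0 : 0 ≤ ∑ i ∈ Bᶜ, ‖z i - wstar‖ ^ 2 :=
    Finset.sum_nonneg fun i _ => sq_nonneg _
  -- square both sides of key
  have hsq : ((n:ℝ) - 2*m) ^ 2 * r ^ 2 ≤ 4 * S ^ 2 := by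
    have h1 : (((n:ℝ) - 2*m) * r) ^ 2 ≤ (2 * S) ^ 2 := by
      apply sq_le_sq'
      · nlinarith
      · exact key
    nlinarith
  have hmain : r ^ 2 ≤ 4 * ((n:ℝ) - m) / ((n:ℝ) - 2*m) ^ 2 * ∑ i ∈ Bᶜ, ‖z i - wstar‖ ^ 2 := by
    rw [div_mul_eq_mul_div, le_div_iff₀ (by positivity)]
    nlinarith [hsq, hCS, hn2m, hnm, hT0]
  have hcoef : ((2 - 2 * ((m : ℝ) / n)) / (1 - 2 * ((m : ℝ) / n))) ^ 2 / ((n : ℝ) - m)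
      = 4 * ((n:ℝ) - m) / ((n:ℝ) - 2*m) ^ 2 := by
    have hn' : (n:ℝ) ≠ 0 := ne_of_gt hn
    have h1 : (1 : ℝ) - 2 * ((m:ℝ)/n) = ((n:ℝ) - 2*m)/n := by field_simp
    have h2 : (2 : ℝ) - 2 * ((m:ℝ)/n) = (2*((n:ℝ) - m))/n := by field_simp
    have h3 : (2 * ((n:ℝ) - m) / n / ((↑n - 2*m)/n)) = 2 * ((n:ℝ) - m) / ((n:ℝ) - 2*m) := by
      have hz : ((n:ℝ) - 2*m) ≠ 0 := ne_of_gt hn2m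
      field_simp
    rw [h1, h2, h3]
    field_simp
    ring
  rw [hcoef]
  exact hmain
end
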